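/- arXiv:math/0604513 — 2 statements merged into one kernel-verified Lean document; each statement's English description precedes it below -/
import Mathlib

section
/- Let $X_1,\ldots,X_n$ be i.i.d. real-valued random variables with $E|X_1|^{1+\eta} < \infty$ for some $\eta \in (0,1]$. Let $\mu = E X_1$, $\bar{X}_n = n^{-1}\sum_{i=1}^n X_i$, and $\rho = (E|X_1|^{1+\eta})^{1/(1+\eta)}$. Then $E|\bar{X}_n - \mu| \le 3\rho\, n^{-\eta/(1+\eta)}$ for all $n \ge 1$. -/
open MeasureTheory ProbabilityTheory Filter

lemma cs_aux {Ω : Type*} {mΩ : MeasurableSpace Ω} (μ : Measure Ω) [IsProbabilityMeasure μ]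
    {W : Ω → ℝ} (hW : MemLp W 2 μ) :
    ∫ ω, |W ω| ∂μ ≤ Real.sqrt (∫ ω, (W ω) ^ 2 ∂μ) := by
  have h2 : (2:ℝ).HolderConjugate 2 := Real.HolderConjugate.two_two
  have h2' : ENNReal.ofReal (2:ℝ) = 2 := by
    simp [ENNReal.ofReal_ofNat]
  have hWa : MemLp (fun ω => |W ω|) (ENNReal.ofReal (2:ℝ)) μ := by
    rw [h2']
    simpa [Real.norm_eq_abs] using hW.norm
  have hone : MemLp (fun _ : Ω => (1:ℝ)) (ENNReal.ofReal (2:ℝ)) μ := by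
    rw [h2']; exact memLp_const 1
  have H := integral_mul_le_Lp_mul_Lq_of_nonneg h2
    (Eventually.of_forall fun ω => abs_nonneg (W ω))
    (Eventually.of_forall fun _ => zero_le_one) hWa hone
  simp only [mul_one] at H
  have e1 : ∫ ω, |W ω| ^ (2:ℝ) ∂μ = ∫ ω, (W ω) ^ 2 ∂μ := by
    refine integral_congr_ae (Eventually.of_forall fun ω => ?_)
    show |W ω| ^ ((2:ℕ):ℝ) = _
    rw [Real.rpow_natCast, sq_abs]
  have e2 : ∫ _ω : Ω, (1:ℝ) ^ (2:ℝ) ∂μ = 1 := by simp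
  rw [e1, e2] at H
  simpa [Real.sqrt_eq_rpow] using H

/-- Lemma 1: L¹ rate of convergence of the sample mean of i.i.d. random variables
with a finite `(1+η)`-th absolute moment. -/
theorem stmt0 {Ω : Type*} {mΩ : MeasurableSpace Ω} (μ : Measure Ω) [IsProbabilityMeasure μ]
    (n : ℕ) (hn : 0 < n) (X : Fin n → Ω → ℝ)
    (η : ℝ) (hη0 : 0 < η) (hη1 : η ≤ 1)
    (hmeas : ∀ i, Measurable (X i))
    (hindep : iIndepFun X μ)
    (hident : ∀ i, Measure.map (X i) μ = Measure.map (X ⟨0, hn⟩) μ)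
    (hmom : Integrable (fun ω => |X ⟨0, hn⟩ ω| ^ (1 + η)) μ)
    (m ρ : ℝ)
    (hm : m = ∫ ω, X ⟨0, hn⟩ ω ∂μ)
    (hρ : ρ = (∫ ω, |X ⟨0, hn⟩ ω| ^ (1 + η) ∂μ) ^ (1 / (1 + η))) :
    ∫ ω, |(n : ℝ)⁻¹ * ∑ i, X i ω - m| ∂μ ≤ 3 * ρ * (n : ℝ) ^ (-(η / (1 + η))) := by
  set X0 : Ω → ℝ := X ⟨0, hn⟩ with hX0def
  set N : ℝ := (n : ℝ) with hNdef
  have hNpos : (0:ℝ) < N := by rw [hNdef]; exact Nat.cast_pos.mpr hn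
  have hNne : N ≠ 0 := hNpos.ne'
  have h1η : (0:ℝ) < 1 + η := by linarith
  -- transfer of integrals through identical distribution
  have key : ∀ (g : ℝ → ℝ), Measurable g → ∀ i,
      ∫ ω, g (X i ω) ∂μ = ∫ ω, g (X0 ω) ∂μ := by
    intro g hg i
    rw [← integral_map (hmeas i).aemeasurable hg.aestronglyMeasurable, hident i,
      integral_map (hmeas _).aemeasurable hg.aestronglyMeasurable]
  have keyInt : ∀ (g : ℝ → ℝ), Measurable g → ∀ i,
      Integrable (fun ω => g (X0 ω)) μ → Integrable (fun ω => g (X i ω)) μ := by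
    intro g hg i h
    have h1 : Integrable g (Measure.map X0 μ) :=
      (integrable_map_measure hg.aestronglyMeasurable (hmeas _).aemeasurable).mpr h
    have h2 : Integrable g (Measure.map (X i) μ) := by rw [hident i]; exact h1
    exact (integrable_map_measure hg.aestronglyMeasurable (hmeas i).aemeasurable).mp h2
  -- X0 is integrable
  have hX0int : Integrable X0 μ := by
    refine Integrable.mono' ((integrable_const (1:ℝ)).add hmom)
      (hmeas _).aestronglyMeasurable (Eventually.of_forall fun ω => ?_)
    rw [Real.norm_eq_abs]
    simp only [Pi.add_apply]
    rcases le_total (|X0 ω|) 1 with h | h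
    · have h0 : (0:ℝ) ≤ |X0 ω| ^ (1+η) := Real.rpow_nonneg (abs_nonneg _) _
      linarith
    · have h1 : |X0 ω| ^ (1:ℝ) ≤ |X0 ω| ^ (1+η) :=
        Real.rpow_le_rpow_of_exponent_le h (by linarith)
      rw [Real.rpow_one] at h1
      linarith
  have hXint : ∀ i, Integrable (X i) μ := fun i => keyInt id measurable_id i hX0int
  set M : ℝ := ∫ ω, |X0 ω| ^ (1+η) ∂μ with hMdef
  have hMnn : 0 ≤ M := integral_nonneg fun ω => Real.rpow_nonneg (abs_nonneg _) _
  rcases eq_or_lt_of_le hMnn with hM0 | hMpos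
  · -- degenerate case: M = 0, everything is a.e. zero
    have hae0 : ∀ᵐ ω ∂μ, X0 ω = 0 := by
      have h := (integral_eq_zero_iff_of_nonneg
        (fun ω => Real.rpow_nonneg (abs_nonneg _) _) hmom).mp hM0.symm
      filter_upwards [h] with ω hω
      by_contra hne
      have hpos : 0 < |X0 ω| := abs_pos.mpr hne
      have := Real.rpow_pos_of_pos hpos (1+η)
      have hz : |X0 ω| ^ (1+η) = 0 := hω
      linarith
    have hXi0 : ∀ i, ∀ᵐ ω ∂μ, X i ω = 0 := by
      intro i
      have habs : Integrable (fun ω => |X i ω|) μ :=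
        keyInt _ measurable_abs i (by simpa using hX0int.abs)
      have hint0 : ∫ ω, |X i ω| ∂μ = 0 := by
        rw [key _ measurable_abs i]
        have : (fun ω => |X0 ω|) =ᵐ[μ] 0 := by
          filter_upwards [hae0] with ω hω; simp [hω]
        rw [integral_congr_ae this]
        simp
      have h := (integral_eq_zero_iff_of_nonneg (fun ω => abs_nonneg _) habs).mp hint0
      filter_upwards [h] with ω hω
      exact abs_eq_zero.mp hω
    have hm0 : m = 0 := by
      rw [hm]
      have : X0 =ᵐ[μ] 0 := by filter_upwards [hae0] with ω hω; exact hω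
      rw [integral_congr_ae this]
      simp
    have hLHS : ∫ ω, |(N:ℝ)⁻¹ * ∑ i, X i ω - m| ∂μ = 0 := by
      have hall : ∀ᵐ ω ∂μ, ∀ i, X i ω = 0 := ae_all_iff.mpr hXi0
      have : (fun ω => |(N:ℝ)⁻¹ * ∑ i, X i ω - m|) =ᵐ[μ] 0 := by
        filter_upwards [hall] with ω hω
        simp [hω, hm0, Finset.sum_const_zero]
      rw [integral_congr_ae this]
      simp
    rw [hLHS]
    have hρ0 : ρ = 0 := by
      rw [hρ, ← hM0, Real.zero_rpow]
      positivity
    rw [hρ0]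
    simp
  -- main case : M > 0
  have hρpos : 0 < ρ := by rw [hρ]; exact Real.rpow_pos_of_pos hMpos _
  have hMρ : M = ρ ^ (1+η) := by
    rw [hρ, ← Real.rpow_mul hMnn]
    rw [show 1/(1+η) * (1+η) = 1 by field_simp, Real.rpow_one]
  set c : ℝ := ρ * N ^ (1/(1+η)) with hcdef
  have hcpos : 0 < c := mul_pos hρpos (Real.rpow_pos_of_pos hNpos _)
  set φ : ℝ → ℝ := fun x => if |x| ≤ c then x else 0 with hφdef
  set ψ : ℝ → ℝ := fun x => x - φ x with hψdef
  have hφm : Measurable φ :=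
    Measurable.ite (measurableSet_le measurable_abs measurable_const)
      measurable_id measurable_const
  have hψm : Measurable ψ := measurable_id.sub hφm
  have hφle : ∀ x, |φ x| ≤ c := by
    intro x; by_cases h : |x| ≤ c <;> simp [hφdef, h, hcpos.le]
  have hφabs : ∀ x, |φ x| ≤ |x| := by
    intro x; by_cases h : |x| ≤ c <;> simp [hφdef, h, abs_nonneg]
  have hψabs : ∀ x, |ψ x| ≤ |x| := by
    intro x; by_cases h : |x| ≤ c <;> simp [hψdef, hφdef, h, abs_nonneg]
  have hφsq : ∀ x, (φ x)^2 ≤ c ^ (1-η) * |x| ^ (1+η) := by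
    intro x
    have e : (1-η) + (1+η) = (2:ℝ) := by ring
    calc (φ x)^2 = |φ x| ^ ((1-η) + (1+η)) := by
          rw [e]
          show _ = |φ x| ^ ((2:ℕ):ℝ)
          rw [Real.rpow_natCast, sq_abs]
      _ = |φ x| ^ (1-η) * |φ x| ^ (1+η) :=
          Real.rpow_add' (abs_nonneg _) (by rw [e]; norm_num)
      _ ≤ c ^ (1-η) * |x| ^ (1+η) := by
          apply mul_le_mul
          · exact Real.rpow_le_rpow (abs_nonneg _) (hφle x) (by linarith)
          · exact Real.rpow_le_rpow (abs_nonneg _) (hφabs x) (by linarith)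
          · positivity
          · positivity
  have hψbd : ∀ x, |ψ x| ≤ c ^ (-η) * |x| ^ (1+η) := by
    intro x
    by_cases h : |x| ≤ c
    · have : ψ x = 0 := by simp [hψdef, hφdef, h]
      rw [this, abs_zero]
      positivity
    · push_neg at h
      have hx : 0 < |x| := lt_trans hcpos h
      have hψx : |ψ x| = |x| := by
        simp [hψdef, hφdef, if_neg (not_le.mpr h)]
      rw [hψx]
      have e : -η + (1+η) = (1:ℝ) := by ring
      calc |x| = |x| ^ (-η) * |x| ^ (1+η) := by
            rw [← Real.rpow_add hx, e, Real.rpow_one]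
        _ ≤ c ^ (-η) * |x| ^ (1+η) := by
            apply mul_le_mul_of_nonneg_right _ (by positivity)
            exact Real.rpow_le_rpow_of_nonpos hcpos h.le (by linarith)
  -- truncated and remainder variables
  set Y : Fin n → Ω → ℝ := fun i ω => φ (X i ω) with hYdef
  set Z : Fin n → Ω → ℝ := fun i ω => ψ (X i ω) with hZdef
  have hYmem : ∀ i, MemLp (Y i) 2 μ := fun i =>
    MemLp.of_bound ((hφm.comp (hmeas i)).aestronglyMeasurable) c
      (Eventually.of_forall fun ω => by
        simpa [Real.norm_eq_abs] using hφle (X i ω))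
  have hYindep : iIndepFun Y μ :=
    hindep.comp (fun _ => φ) (fun _ => hφm)
  have hvar : variance (∑ i, Y i) μ = ∑ i, variance (Y i) μ :=
    IndepFun.variance_sum (fun i _ => hYmem i)
      (fun i _ j _ hij => hYindep.indepFun hij)
  have hA1 : ∫ ω, (φ (X0 ω))^2 ∂μ ≤ c ^ (1-η) * M := by
    have h := integral_mono_of_nonneg
      (Eventually.of_forall fun ω => sq_nonneg (φ (X0 ω)))
      (hmom.const_mul (c ^ (1-η)))
      (Eventually.of_forall fun ω => hφsq (X0 ω))
    rwa [integral_const_mul] at h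
  have hvar_i : ∀ i, variance (Y i) μ ≤ c ^ (1-η) * M := by
    intro i
    have h1 := variance_le_expectation_sq (μ := μ) (X := Y i)
      ((hφm.comp (hmeas i)).aestronglyMeasurable)
    have h2 : ∫ ω, ((Y i) ^ 2) ω ∂μ = ∫ ω, (φ (X0 ω))^2 ∂μ := by
      have hk := key (fun x => (φ x)^2) (hφm.pow_const 2) i
      simpa using hk
    calc variance (Y i) μ ≤ ∫ ω, ((Y i) ^ 2) ω ∂μ := h1
      _ = ∫ ω, (φ (X0 ω))^2 ∂μ := h2
      _ ≤ c ^ (1-η) * M := hA1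
  have hvarsum : variance (∑ i, Y i) μ ≤ N * (c ^ (1-η) * M) := by
    rw [hvar]
    calc ∑ i, variance (Y i) μ ≤ ∑ _i : Fin n, c ^ (1-η) * M :=
          Finset.sum_le_sum fun i _ => hvar_i i
      _ = N * (c ^ (1-η) * M) := by
          simp [Finset.sum_const, Finset.card_univ, nsmul_eq_mul, hNdef]
  set F : Ω → ℝ := ∑ i, Y i with hFdef
  set G : Ω → ℝ := ∑ i, Z i with hGdef
  have hSYmem : MemLp F 2 μ := memLp_finset_sum' _ (fun i _ => hYmem i)
  have hFint : Integrable F μ := hSYmem.integrable one_le_two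
  set EF : ℝ := ∫ ω, F ω ∂μ with hEFdef
  have hA : ∫ ω, |F ω - EF| ∂μ ≤ Real.sqrt (N * (c ^ (1-η) * M)) := by
    have hmem : MemLp (fun ω => F ω - EF) 2 μ := hSYmem.sub (memLp_const _)
    have h1 := cs_aux μ hmem
    have h2 : ∫ ω, (F ω - EF)^2 ∂μ = variance F μ := by
      rw [variance_eq_integral hSYmem.aestronglyMeasurable.aemeasurable]
    calc ∫ ω, |F ω - EF| ∂μ ≤ Real.sqrt (∫ ω, (F ω - EF)^2 ∂μ) := h1
      _ = Real.sqrt (variance F μ) := by rw [h2]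
      _ ≤ Real.sqrt (N * (c ^ (1-η) * M)) := Real.sqrt_le_sqrt hvarsum
  -- the remainder part
  have hψX0int : Integrable (fun ω => ψ (X0 ω)) μ := by
    refine Integrable.mono' (hmom.const_mul (c ^ (-η)))
      ((hψm.comp (hmeas _)).aestronglyMeasurable)
      (Eventually.of_forall fun ω => ?_)
    simpa [Real.norm_eq_abs] using hψbd (X0 ω)
  have hZint : ∀ i, Integrable (Z i) μ := fun i => keyInt ψ hψm i hψX0int
  have hZbd : ∀ i, ∫ ω, |Z i ω| ∂μ ≤ c ^ (-η) * M := by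
    intro i
    have hk : ∫ ω, |Z i ω| ∂μ = ∫ ω, |ψ (X0 ω)| ∂μ :=
      key (fun x => |ψ x|) hψm.abs i
    rw [hk]
    have h := integral_mono_of_nonneg
      (Eventually.of_forall fun ω => abs_nonneg (ψ (X0 ω)))
      (hmom.const_mul (c ^ (-η)))
      (Eventually.of_forall fun ω => hψbd (X0 ω))
    rwa [integral_const_mul] at h
  have hGint : Integrable G μ := integrable_finset_sum' _ (fun i _ => hZint i)
  set EG : ℝ := ∫ ω, G ω ∂μ with hEGdef
  have hGabs_int : Integrable (fun ω => |G ω|) μ := hGint.abs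
  have hB : ∫ ω, |G ω - EG| ∂μ ≤ 2 * (N * (c ^ (-η) * M)) := by
    have h3 : ∫ ω, |G ω| ∂μ ≤ N * (c ^ (-η) * M) := by
      have hGle : ∀ ω, |G ω| ≤ ∑ i, |Z i ω| := by
        intro ω
        have : G ω = ∑ i, Z i ω := by simp [hGdef, Finset.sum_apply]
        rw [this]
        exact Finset.abs_sum_le_sum_abs _ _
      calc ∫ ω, |G ω| ∂μ ≤ ∫ ω, ∑ i, |Z i ω| ∂μ :=
            integral_mono hGabs_int
              (integrable_finset_sum _ fun i _ => (hZint i).abs) hGle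
        _ = ∑ i, ∫ ω, |Z i ω| ∂μ := integral_finset_sum _ fun i _ => (hZint i).abs
        _ ≤ ∑ _i : Fin n, c ^ (-η) * M := Finset.sum_le_sum fun i _ => hZbd i
        _ = N * (c ^ (-η) * M) := by
            simp [Finset.sum_const, Finset.card_univ, nsmul_eq_mul, hNdef]
    have h2 : |EG| ≤ ∫ ω, |G ω| ∂μ := by
      simpa [Real.norm_eq_abs, hEGdef] using norm_integral_le_integral_norm (μ := μ) G
    have h1 : ∫ ω, |G ω - EG| ∂μ ≤ ∫ ω, |G ω| ∂μ + |EG| := by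
      have hle : ∀ ω, |G ω - EG| ≤ |G ω| + |EG| := fun ω => abs_sub _ _
      calc ∫ ω, |G ω - EG| ∂μ ≤ ∫ ω, (|G ω| + |EG|) ∂μ :=
            integral_mono ((hGint.sub (integrable_const _)).abs)
              (hGabs_int.add (integrable_const _)) hle
        _ = ∫ ω, |G ω| ∂μ + |EG| := by
            rw [integral_add hGabs_int (integrable_const _), integral_const]
            simp
    linarith
  -- decomposition
  have hsplit : ∀ ω, ∑ i, X i ω = F ω + G ω := by
    intro ω
    have hFω : F ω = ∑ i, Y i ω := by simp [hFdef, Finset.sum_apply]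
    have hGω : G ω = ∑ i, Z i ω := by simp [hGdef, Finset.sum_apply]
    rw [hFω, hGω, ← Finset.sum_add_distrib]
    refine Finset.sum_congr rfl fun i _ => ?_
    simp [hYdef, hZdef, hψdef]
  have hNm : N * m = EF + EG := by
    have hm' : ∀ i, ∫ ω, X i ω ∂μ = m := by
      intro i
      rw [hm]
      exact key id measurable_id i
    have e1 : EF + EG = ∫ ω, (F ω + G ω) ∂μ := (integral_add hFint hGint).symm
    have e2 : ∫ ω, (F ω + G ω) ∂μ = ∫ ω, ∑ i, X i ω ∂μ := by
      refine integral_congr_ae (Eventually.of_forall fun ω => ?_)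
      exact (hsplit ω).symm
    have e3 : ∫ ω, ∑ i, X i ω ∂μ = ∑ i, ∫ ω, X i ω ∂μ :=
      integral_finset_sum _ fun i _ => hXint i
    rw [e1, e2, e3]
    simp [hm', Finset.sum_const, Finset.card_univ, nsmul_eq_mul, hNdef]
  have hdecomp : ∀ ω, N⁻¹ * ∑ i, X i ω - m = N⁻¹ * ((F ω - EF) + (G ω - EG)) := by
    intro ω
    rw [hsplit ω]
    have hmval : m = N⁻¹ * (EF + EG) := by
      rw [← hNm]; field_simp
    rw [hmval]; ring
  -- put everything together
  have hfinal : ∫ ω, |N⁻¹ * ∑ i, X i ω - m| ∂μ ≤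
      N⁻¹ * (Real.sqrt (N * (c ^ (1-η) * M)) + 2 * (N * (c ^ (-η) * M))) := by
    have hintF : Integrable (fun ω => |F ω - EF|) μ :=
      (hFint.sub (integrable_const _)).abs
    have hintG : Integrable (fun ω => |G ω - EG|) μ :=
      (hGint.sub (integrable_const _)).abs
    calc ∫ ω, |N⁻¹ * ∑ i, X i ω - m| ∂μ
        = ∫ ω, N⁻¹ * |(F ω - EF) + (G ω - EG)| ∂μ := by
          refine integral_congr_ae (Eventually.of_forall fun ω => ?_)
          show |N⁻¹ * ∑ i, X i ω - m| = N⁻¹ * |(F ω - EF) + (G ω - EG)|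
          rw [hdecomp ω, abs_mul, abs_of_nonneg (inv_nonneg.mpr hNpos.le)]
      _ = N⁻¹ * ∫ ω, |(F ω - EF) + (G ω - EG)| ∂μ := integral_const_mul _ _
      _ ≤ N⁻¹ * ∫ ω, (|F ω - EF| + |G ω - EG|) ∂μ := by
          apply mul_le_mul_of_nonneg_left _ (inv_nonneg.mpr hNpos.le)
          exact integral_mono
            (((hFint.sub (integrable_const _)).add (hGint.sub (integrable_const _))).abs)
            (hintF.add hintG) (fun ω => abs_add_le _ _)
      _ = N⁻¹ * (∫ ω, |F ω - EF| ∂μ + ∫ ω, |G ω - EG| ∂μ) := by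
          rw [integral_add hintF hintG]
      _ ≤ N⁻¹ * (Real.sqrt (N * (c ^ (1-η) * M)) + 2 * (N * (c ^ (-η) * M))) := by
          apply mul_le_mul_of_nonneg_left (add_le_add hA hB) (inv_nonneg.mpr hNpos.le)
  -- final algebra
  have e1 : c ^ (-η) * M = ρ * N ^ (-(η / (1+η))) := by
    have hc : c ^ (-η) = ρ ^ (-η) * N ^ (-(η/(1+η))) := by
      rw [hcdef, Real.mul_rpow hρpos.le (Real.rpow_nonneg hNpos.le _),
        ← Real.rpow_mul hNpos.le]
      congr 1
      ring
    have hr : ρ ^ (-η) * ρ ^ (1+η) = ρ := by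
      rw [← Real.rpow_add hρpos, show -η + (1+η) = (1:ℝ) by ring, Real.rpow_one]
    rw [hMρ, hc]
    calc ρ ^ (-η) * N ^ (-(η/(1+η))) * ρ ^ (1+η)
        = (ρ ^ (-η) * ρ ^ (1+η)) * N ^ (-(η/(1+η))) := by ring
      _ = ρ * N ^ (-(η/(1+η))) := by rw [hr]
  have i1 : N * (c ^ (1-η) * M) = (ρ * N ^ (1/(1+η)))^2 := by
    have hc : c ^ (1-η) = ρ ^ (1-η) * N ^ ((1-η)/(1+η)) := by
      rw [hcdef, Real.mul_rpow hρpos.le (Real.rpow_nonneg hNpos.le _),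
        ← Real.rpow_mul hNpos.le]
      congr 1
      field_simp
    have hr : ρ ^ (1-η) * ρ ^ (1+η) = ρ ^ (2:ℕ) := by
      rw [← Real.rpow_add hρpos, show (1-η) + (1+η) = ((2:ℕ):ℝ) by push_cast; ring,
        Real.rpow_natCast]
    have hN2 : N ^ (1:ℝ) * N ^ ((1-η)/(1+η)) = (N ^ (1/(1+η))) ^ (2:ℕ) := by
      rw [← Real.rpow_natCast (N ^ (1/(1+η))) 2, ← Real.rpow_mul hNpos.le,
        ← Real.rpow_add hNpos]
      congr 1
      push_cast
      field_simp
      ring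
    calc N * (c ^ (1-η) * M)
        = (ρ ^ (1-η) * ρ ^ (1+η)) * (N ^ (1:ℝ) * N ^ ((1-η)/(1+η))) := by
          rw [hc, hMρ, Real.rpow_one]; ring
      _ = ρ ^ (2:ℕ) * (N ^ (1/(1+η))) ^ (2:ℕ) := by rw [hr, hN2]
      _ = (ρ * N ^ (1/(1+η)))^2 := by ring
  have e2 : N⁻¹ * Real.sqrt (N * (c ^ (1-η) * M)) = ρ * N ^ (-(η / (1+η))) := by
    rw [i1, Real.sqrt_sq (by positivity)]
    rw [show N⁻¹ = N ^ (-1:ℝ) from (Real.rpow_neg_one N).symm]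
    calc N ^ (-1:ℝ) * (ρ * N ^ (1/(1+η))) = ρ * (N ^ (-1:ℝ) * N ^ (1/(1+η))) := by ring
      _ = ρ * N ^ (-1 + 1/(1+η)) := by rw [← Real.rpow_add hNpos]
      _ = ρ * N ^ (-(η/(1+η))) := by
          congr 1
          field_simp
          ring
  calc ∫ ω, |N⁻¹ * ∑ i, X i ω - m| ∂μ
      ≤ N⁻¹ * (Real.sqrt (N * (c ^ (1-η) * M)) + 2 * (N * (c ^ (-η) * M))) := hfinal
    _ = N⁻¹ * Real.sqrt (N * (c ^ (1-η) * M)) + 2 * (c ^ (-η) * M) := by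
        field_simp
    _ = ρ * N ^ (-(η / (1+η))) + 2 * (ρ * N ^ (-(η / (1+η)))) := by rw [e1, e2]
    _ = 3 * ρ * N ^ (-(η / (1+η))) := by ring
end

section
/- Let $Z_1, \ldots, Z_N$ be i.i.d. random vectors in $\mathbb{R}^k$ with $E\|Z_1\|^{2+2\eta} < \infty$ for some $\eta \in (0,1]$. Let $V^* = N^{-1}\sum_{l} Z_l Z_l^T - \bar{Z}\bar{Z}^T$ be the empirical covariance matrix and $V = \mathrm{Cov}(Z_1)$. Then $E\|V^* - V\| = O(N^{-\eta/(1+\eta)})$ as $N \to \infty$. -/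
open MeasureTheory ProbabilityTheory Filter

section Aux
open Finset

section Helpers

set_option linter.unusedSectionVars false
variable {Ω : Type*} {mΩ : MeasurableSpace Ω} {μ : Measure Ω} [IsProbabilityMeasure μ]

lemma map_int_eq {X Y : Ω → ℝ} (hX : Measurable X) (hY : Measurable Y)
    (h : μ.map X = μ.map Y) (g : ℝ → ℝ) (hg : Measurable g) :
    ∫ ω, g (X ω) ∂μ = ∫ ω, g (Y ω) ∂μ := by
  rw [← integral_map hX.aemeasurable hg.aestronglyMeasurable, h,
    integral_map hY.aemeasurable hg.aestronglyMeasurable]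

lemma map_integrable {X Y : Ω → ℝ} (hX : Measurable X) (hY : Measurable Y)
    (h : μ.map X = μ.map Y) (g : ℝ → ℝ) (hg : Measurable g)
    (hInt : Integrable (fun ω => g (Y ω)) μ) : Integrable (fun ω => g (X ω)) μ := by
  have h1 : Integrable g (μ.map X) := by
    rw [h, integrable_map_measure hg.aestronglyMeasurable hY.aemeasurable]
    exact hInt
  rw [integrable_map_measure hg.aestronglyMeasurable hX.aemeasurable] at h1
  exact h1

lemma map_memℒp2 {X Y : Ω → ℝ} (hX : Measurable X) (hY : Measurable Y)
    (h : μ.map X = μ.map Y) (h2 : MemLp Y 2 μ) : MemLp X 2 μ := by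
  have h1 : MemLp id 2 (μ.map X) := by
    rw [h]
    exact (memLp_map_measure_iff aestronglyMeasurable_id hY.aemeasurable).2 h2
  exact (memLp_map_measure_iff aestronglyMeasurable_id hX.aemeasurable).1 h1

lemma cs_integral {U V : Ω → ℝ} (hU : MemLp U 2 μ) (hV : MemLp V 2 μ) :
    ∫ ω, |U ω * V ω| ∂μ ≤ Real.sqrt (∫ ω, U ω ^ 2 ∂μ) * Real.sqrt (∫ ω, V ω ^ 2 ∂μ) := by
  have hpq : (2:ℝ).HolderConjugate 2 := Real.HolderConjugate.two_two
  have hU2 : MemLp (fun ω => |U ω|) (ENNReal.ofReal 2) μ := by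
    have := hU.norm
    simpa [Real.norm_eq_abs, ENNReal.ofReal_ofNat] using this
  have hV2 : MemLp (fun ω => |V ω|) (ENNReal.ofReal 2) μ := by
    have := hV.norm
    simpa [Real.norm_eq_abs, ENNReal.ofReal_ofNat] using this
  have key := integral_mul_le_Lp_mul_Lq_of_nonneg hpq
      (Eventually.of_forall fun ω => abs_nonneg (U ω))
      (Eventually.of_forall fun ω => abs_nonneg (V ω)) hU2 hV2
  have e1 : ∀ f : Ω → ℝ, ∫ ω, |f ω| ^ (2:ℝ) ∂μ = ∫ ω, f ω ^ 2 ∂μ := by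
    intro f
    refine integral_congr_ae (Eventually.of_forall fun ω => ?_)
    show |f ω| ^ (2:ℝ) = f ω ^ 2
    rw [show ((2:ℝ)) = ((2:ℕ):ℝ) by norm_num, Real.rpow_natCast, sq_abs]
  have e2 : ∀ f : Ω → ℝ, (∫ ω, f ω ^ 2 ∂μ) ^ ((1:ℝ)/2) = Real.sqrt (∫ ω, f ω ^ 2 ∂μ) := by
    intro f
    rw [Real.sqrt_eq_rpow]
  calc ∫ ω, |U ω * V ω| ∂μ = ∫ ω, |U ω| * |V ω| ∂μ := by
        simp [abs_mul]
    _ ≤ (∫ ω, |U ω| ^ (2:ℝ) ∂μ) ^ ((1:ℝ)/2) * (∫ ω, |V ω| ^ (2:ℝ) ∂μ) ^ ((1:ℝ)/2) := key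
    _ = Real.sqrt (∫ ω, U ω ^ 2 ∂μ) * Real.sqrt (∫ ω, V ω ^ 2 ∂μ) := by
        rw [e1 U, e1 V, e2 U, e2 V]

lemma abs_int_le_sqrt {Y : Ω → ℝ} (hY : MemLp Y 2 μ) :
    ∫ ω, |Y ω| ∂μ ≤ Real.sqrt (∫ ω, Y ω ^ 2 ∂μ) := by
  have h := cs_integral hY (memLp_const (1:ℝ))
  simpa using h

end Helpers

section AvgSq
variable {Ω : Type*} {mΩ : MeasurableSpace Ω} {μ : Measure Ω} [IsProbabilityMeasure μ]

lemma avg_sq_le (X : ℕ → Ω → ℝ) (hm : ∀ l, Measurable (X l))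
    (hmap : ∀ l, μ.map (X l) = μ.map (X 0))
    (hind : ∀ l l', l ≠ l' → IndepFun (X l) (X l') μ)
    (h2 : MemLp (X 0) 2 μ) (N : ℕ) (hN : 1 ≤ N) :
    ∫ ω, ((N:ℝ)⁻¹ * ∑ l ∈ range N, X l ω - ∫ ω', X 0 ω' ∂μ) ^ 2 ∂μ
      ≤ (∫ ω, X 0 ω ^ 2 ∂μ) / N := by
  have hNpos : (0:ℝ) < N := by exact_mod_cast hN
  have hNne : (N:ℝ) ≠ 0 := ne_of_gt hNpos
  have h2l : ∀ l, MemLp (X l) 2 μ := fun l => map_memℒp2 (hm l) (hm 0) (hmap l) h2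
  have hint : ∀ l, Integrable (X l) μ := fun l => (h2l l).integrable one_le_two
  set m := ∫ ω', X 0 ω' ∂μ with hm_def
  have hml : ∀ l, ∫ ω, X l ω ∂μ = m := fun l =>
    map_int_eq (hm l) (hm 0) (hmap l) id measurable_id
  have hsq : ∀ l, ∫ ω, X l ω ^ 2 ∂μ = ∫ ω, X 0 ω ^ 2 ∂μ := fun l =>
    map_int_eq (hm l) (hm 0) (hmap l) (fun x => x ^ 2) (measurable_id.pow_const 2)
  have hvar : ∀ l, variance (X l) μ = variance (X 0) μ := by
    intro l
    rw [variance_eq_sub (h2l l), variance_eq_sub h2]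
    simp only [Pi.pow_apply]
    rw [hsq l, hml l, hml 0]
  set S : Ω → ℝ := fun ω => ∑ l ∈ range N, X l ω with hS_def
  have hSsum : S = ∑ l ∈ range N, X l := by
    ext ω; simp [hS_def]
  have hSmem : MemLp S 2 μ := by
    rw [hSsum]; exact memLp_finset_sum' _ fun l _ => h2l l
  have hSint : Integrable S μ := hSmem.integrable one_le_two
  have hSsqint : Integrable (fun ω => S ω ^ 2) μ := hSmem.integrable_sq
  have hES : ∫ ω, S ω ∂μ = N * m := by
    rw [hS_def]
    rw [integral_finset_sum _ fun l _ => hint l]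
    simp [hml, card_range]
  have hvarS : variance S μ = N * variance (X 0) μ := by
    rw [hSsum, IndepFun.variance_sum (fun l _ => h2l l)
      (fun i _ j _ hij => hind i j hij)]
    simp [hvar, card_range]
  have hvarS' : variance S μ = ∫ ω, S ω ^ 2 ∂μ - (N * m) ^ 2 := by
    rw [variance_eq_sub hSmem]
    simp only [Pi.pow_apply]
    rw [hES]
  have hexp : ∫ ω, (S ω - N * m) ^ 2 ∂μ = N * variance (X 0) μ := by
    have e : ∀ ω, (S ω - N * m) ^ 2
        = S ω ^ 2 - 2 * (N * m) * S ω + (N * m) ^ 2 := by intro ω; ring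
    calc ∫ ω, (S ω - N * m) ^ 2 ∂μ
        = ∫ ω, S ω ^ 2 - 2 * (N * m) * S ω + (N * m) ^ 2 ∂μ := by
          simp only [e]
      _ = (∫ ω, S ω ^ 2 ∂μ) - 2 * (N * m) * (∫ ω, S ω ∂μ) + (N * m) ^ 2 := by
          have i1 : Integrable (fun ω => S ω ^ 2 - 2 * ((N:ℝ) * m) * S ω) μ :=
            hSsqint.sub (hSint.const_mul _)
          rw [integral_add i1 (integrable_const _),
            integral_sub hSsqint (hSint.const_mul _), integral_const_mul,
            integral_const]
          simp
      _ = (∫ ω, S ω ^ 2 ∂μ) - (N * m) ^ 2 := by rw [hES]; ring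
      _ = N * variance (X 0) μ := by rw [← hvarS', hvarS]
  have hpt : ∀ ω, ((N:ℝ)⁻¹ * ∑ l ∈ range N, X l ω - m) ^ 2
      = ((N:ℝ)⁻¹) ^ 2 * (S ω - N * m) ^ 2 := by
    intro ω
    rw [hS_def]
    field_simp
    try ring
  calc ∫ ω, ((N:ℝ)⁻¹ * ∑ l ∈ range N, X l ω - m) ^ 2 ∂μ
      = ((N:ℝ)⁻¹) ^ 2 * ∫ ω, (S ω - N * m) ^ 2 ∂μ := by
        simp only [hpt]
        rw [integral_const_mul]
    _ = ((N:ℝ)⁻¹) ^ 2 * (N * variance (X 0) μ) := by rw [hexp]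
    _ = variance (X 0) μ / N := by field_simp
    _ ≤ (∫ ω, X 0 ω ^ 2 ∂μ) / N := by
        gcongr
        have h := variance_le_expectation_sq (μ := μ) (X := X 0) (h2.aestronglyMeasurable)
        simpa only [Pi.pow_apply] using h
end AvgSq

section Lemma1
variable {Ω : Type*} {mΩ : MeasurableSpace Ω} {μ : Measure Ω} [IsProbabilityMeasure μ]

lemma lemma_one (W : ℕ → Ω → ℝ) (hWm : ∀ l, Measurable (W l))
    (hmap : ∀ l, μ.map (W l) = μ.map (W 0))
    (hind : ∀ l l', l ≠ l' → IndepFun (W l) (W l') μ)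
    {η : ℝ} (hη0 : 0 < η) (hη1 : η ≤ 1)
    (hM : Integrable (fun ω => |W 0 ω| ^ (1+η)) μ) :
    ∃ C : ℝ, 0 ≤ C ∧ ∀ N : ℕ, 1 ≤ N →
      ∫ ω, |(N:ℝ)⁻¹ * ∑ l ∈ range N, W l ω - ∫ ω', W 0 ω' ∂μ| ∂μ
        ≤ C * (N:ℝ) ^ (-(η/(1+η))) := by
  have h1η : (0:ℝ) < 1 + η := by linarith
  set M : ℝ := ∫ ω, |W 0 ω| ^ (1+η) ∂μ with hM_def
  have hM0 : 0 ≤ M := integral_nonneg fun ω => Real.rpow_nonneg (abs_nonneg _) _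
  refine ⟨Real.sqrt M + 2 * M, by positivity, ?_⟩
  intro N hN
  have hN1 : (1:ℝ) ≤ (N:ℝ) := by exact_mod_cast hN
  have hNpos : (0:ℝ) < N := by linarith
  have hNne : (N:ℝ) ≠ 0 := ne_of_gt hNpos
  -- integrability of the W l
  have habs_le : ∀ x : ℝ, |x| ≤ 1 + |x| ^ (1+η) := by
    intro x
    rcases le_total |x| 1 with h | h
    · have : (0:ℝ) ≤ |x| ^ (1+η) := Real.rpow_nonneg (abs_nonneg _) _
      linarith
    · have h3 : |x| ^ (1:ℝ) ≤ |x| ^ (1+η) :=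
        Real.rpow_le_rpow_of_exponent_le h (by linarith)
      rw [Real.rpow_one] at h3
      linarith
  have hW0int : Integrable (W 0) μ := by
    refine Integrable.mono ((integrable_const (1:ℝ)).add hM)
      (hWm 0).aestronglyMeasurable (Eventually.of_forall fun ω => ?_)
    have h1 : (0:ℝ) ≤ 1 + |W 0 ω| ^ (1+η) := by
      have := Real.rpow_nonneg (abs_nonneg (W 0 ω)) (1+η); linarith
    simp only [Pi.add_apply, Real.norm_eq_abs]
    rw [abs_of_nonneg h1]
    exact habs_le _
  have hWlint : ∀ l, Integrable (W l) μ := fun l =>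
    map_integrable (hWm l) (hWm 0) (hmap l) id measurable_id hW0int
  set m : ℝ := ∫ ω', W 0 ω' ∂μ with hm_def
  -- truncation
  set a : ℝ := (N:ℝ) ^ ((1:ℝ)/(1+η)) with ha_def
  have ha1 : (1:ℝ) ≤ a := Real.one_le_rpow hN1 (by positivity)
  have ha0 : (0:ℝ) < a := by linarith
  set φ : ℝ → ℝ := fun x => if |x| ≤ a then x else 0 with hφ_def
  have hφm : Measurable φ :=
    Measurable.ite (measurableSet_le measurable_abs measurable_const)
      measurable_id measurable_const
  set ψ : ℝ → ℝ := fun x => x - φ x with hψ_def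
  have hψm : Measurable ψ := measurable_id.sub hφm
  have hφ_bd : ∀ x, |φ x| ≤ a := by
    intro x
    simp only [hφ_def]
    split
    · assumption
    · simpa using le_of_lt ha0
  have hφ_sq : ∀ x, (φ x) ^ 2 ≤ a ^ (1-η) * |x| ^ (1+η) := by
    intro x
    simp only [hφ_def]
    split
    · rename_i h
      have e0 : x ^ 2 = |x| ^ (2:ℝ) := by
        rw [show ((2:ℝ)) = ((2:ℕ):ℝ) by norm_num, Real.rpow_natCast, sq_abs]
      have e1 : |x| ^ (2:ℝ) = |x| ^ (1+η) * |x| ^ (1-η) := by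
        rw [← Real.rpow_add' (abs_nonneg x) (by norm_num : (1+η)+(1-η) ≠ 0)]
        norm_num
      have e2 : |x| ^ (1-η) ≤ a ^ (1-η) :=
        Real.rpow_le_rpow (abs_nonneg x) h (by linarith)
      calc x ^ 2 = |x| ^ (1+η) * |x| ^ (1-η) := by rw [e0, e1]
        _ ≤ |x| ^ (1+η) * a ^ (1-η) :=
            mul_le_mul_of_nonneg_left e2 (Real.rpow_nonneg (abs_nonneg _) _)
        _ = a ^ (1-η) * |x| ^ (1+η) := by ring
    · have hnn : (0:ℝ) ≤ a ^ (1-η) * |x| ^ (1+η) := by positivity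
      simpa using hnn
  have hψ_bd : ∀ x, |ψ x| ≤ a ^ (-η) * |x| ^ (1+η) := by
    intro x
    simp only [hψ_def, hφ_def]
    split
    · have hnn : (0:ℝ) ≤ a ^ (-η) * |x| ^ (1+η) := by positivity
      simpa using hnn
    · rename_i h
      push_neg at h
      have hx0 : 0 < |x| := lt_trans ha0 h
      have e1 : |x| = |x| ^ ((1+η) + (-η)) := by
        rw [show (1+η) + (-η) = (1:ℝ) by ring, Real.rpow_one]
      have e2 : |x| ^ ((1+η) + (-η)) = |x| ^ (1+η) * |x| ^ (-η) :=
        Real.rpow_add hx0 _ _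
      have e3 : |x| ^ (-η) ≤ a ^ (-η) :=
        Real.rpow_le_rpow_of_nonpos ha0 (le_of_lt h) (by linarith)
      calc |x - 0| = |x| := by rw [sub_zero]
        _ = |x| ^ (1+η) * |x| ^ (-η) := by rw [← e2, ← e1]
        _ ≤ |x| ^ (1+η) * a ^ (-η) :=
            mul_le_mul_of_nonneg_left e3 (Real.rpow_nonneg (abs_nonneg _) _)
        _ = a ^ (-η) * |x| ^ (1+η) := by ring
  -- truncated and remainder parts
  set T : ℕ → Ω → ℝ := fun l ω => φ (W l ω) with hT_def
  set R : ℕ → Ω → ℝ := fun l ω => ψ (W l ω) with hR_def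
  have hTm : ∀ l, Measurable (T l) := fun l => hφm.comp (hWm l)
  have hRm : ∀ l, Measurable (R l) := fun l => hψm.comp (hWm l)
  have hTmap : ∀ l, μ.map (T l) = μ.map (T 0) := by
    intro l
    have h1 : T l = φ ∘ W l := rfl
    have h2 : T 0 = φ ∘ W 0 := rfl
    rw [h1, h2, ← Measure.map_map hφm (hWm l), hmap l, Measure.map_map hφm (hWm 0)]
  have hTind : ∀ l l', l ≠ l' → IndepFun (T l) (T l') μ := fun l l' h =>
    (hind l l' h).comp hφm hφm
  have hT2 : MemLp (T 0) 2 μ :=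
    MemLp.of_bound (hTm 0).aestronglyMeasurable a
      (Eventually.of_forall fun ω => by rw [Real.norm_eq_abs]; exact hφ_bd _)
  have hTlint : ∀ l, Integrable (T l) μ := fun l =>
    ((map_memℒp2 (hTm l) (hTm 0) (hTmap l) hT2).integrable one_le_two)
  have hRlint : ∀ l, Integrable (R l) μ := by
    intro l
    have h1 : R l = fun ω => W l ω - T l ω := rfl
    rw [h1]
    exact (hWlint l).sub (hTlint l)
  set mT : ℝ := ∫ ω', T 0 ω' ∂μ with hmT_def
  set mR : ℝ := ∫ ω', R 0 ω' ∂μ with hmR_def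
  have hmsplit : m = mT + mR := by
    rw [hm_def, hmT_def, hmR_def, ← integral_add (hTlint 0) (hRlint 0)]
    refine integral_congr_ae (Eventually.of_forall fun ω => ?_)
    show W 0 ω = T 0 ω + R 0 ω
    simp [hT_def, hR_def, hψ_def]
  have hRabs_eq : ∀ l, ∫ ω, |R l ω| ∂μ = ∫ ω, |R 0 ω| ∂μ := fun l =>
    map_int_eq (hWm l) (hWm 0) (hmap l) (fun x => |ψ x|) hψm.abs
  have hRabs_le : ∫ ω, |R 0 ω| ∂μ ≤ a ^ (-η) * M := by
    calc ∫ ω, |R 0 ω| ∂μ ≤ ∫ ω, a ^ (-η) * |W 0 ω| ^ (1+η) ∂μ :=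
          integral_mono (hRlint 0).abs (hM.const_mul _) (fun ω => hψ_bd (W 0 ω))
      _ = a ^ (-η) * M := by rw [integral_const_mul]
  have hmR_le : |mR| ≤ ∫ ω, |R 0 ω| ∂μ := by
    rw [hmR_def]
    calc |∫ ω', R 0 ω' ∂μ| ≤ ∫ ω', ‖R 0 ω'‖ ∂μ := by
          rw [← Real.norm_eq_abs]; exact norm_integral_le_integral_norm _
      _ = ∫ ω', |R 0 ω'| ∂μ := by simp [Real.norm_eq_abs]
  set A : Ω → ℝ := fun ω => (N:ℝ)⁻¹ * ∑ l ∈ range N, T l ω - mT with hA_def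
  set B : Ω → ℝ := fun ω => (N:ℝ)⁻¹ * ∑ l ∈ range N, R l ω - mR with hB_def
  have hdec : ∀ ω, (N:ℝ)⁻¹ * ∑ l ∈ range N, W l ω - m = A ω + B ω := by
    intro ω
    have hWTR : ∀ l, W l ω = T l ω + R l ω := by
      intro l; simp [hT_def, hR_def, hψ_def]
    simp only [hA_def, hB_def]
    rw [hmsplit, show (∑ l ∈ range N, W l ω) = ∑ l ∈ range N, (T l ω + R l ω) from
      Finset.sum_congr rfl fun l _ => hWTR l, Finset.sum_add_distrib]
    ring
  have hAint : Integrable A μ :=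
    ((integrable_finset_sum (range N) fun l _ => hTlint l).const_mul _).sub
      (integrable_const _)
  have hBint : Integrable B μ :=
    ((integrable_finset_sum (range N) fun l _ => hRlint l).const_mul _).sub
      (integrable_const _)
  have hsplit_int : ∫ ω, |(N:ℝ)⁻¹ * ∑ l ∈ range N, W l ω - m| ∂μ
      ≤ ∫ ω, |A ω| ∂μ + ∫ ω, |B ω| ∂μ := by
    calc ∫ ω, |(N:ℝ)⁻¹ * ∑ l ∈ range N, W l ω - m| ∂μ
        = ∫ ω, |A ω + B ω| ∂μ :=
          integral_congr_ae (Eventually.of_forall fun ω => by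
            show |(N:ℝ)⁻¹ * ∑ l ∈ range N, W l ω - m| = |A ω + B ω|
            rw [hdec ω])
      _ ≤ ∫ ω, (|A ω| + |B ω|) ∂μ :=
          integral_mono (hAint.add hBint).abs (hAint.abs.add hBint.abs)
            (fun ω => abs_add_le _ _)
      _ = ∫ ω, |A ω| ∂μ + ∫ ω, |B ω| ∂μ := integral_add hAint.abs hBint.abs
  have hBptw : ∀ ω, |B ω| ≤ (N:ℝ)⁻¹ * ∑ l ∈ range N, |R l ω| + |mR| := by
    intro ω
    simp only [hB_def]
    calc |(N:ℝ)⁻¹ * ∑ l ∈ range N, R l ω - mR|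
        ≤ |(N:ℝ)⁻¹ * ∑ l ∈ range N, R l ω| + |mR| := abs_sub _ _
      _ ≤ (N:ℝ)⁻¹ * ∑ l ∈ range N, |R l ω| + |mR| := by
          rw [abs_mul, abs_of_nonneg (inv_nonneg.2 hNpos.le)]
          exact add_le_add_left (mul_le_mul_of_nonneg_left
            (Finset.abs_sum_le_sum_abs _ _) (inv_nonneg.2 hNpos.le)) _
  have hBbd : ∫ ω, |B ω| ∂μ ≤ 2 * (a ^ (-η) * M) := by
    have hint2 : Integrable (fun ω => (N:ℝ)⁻¹ * ∑ l ∈ range N, |R l ω| + |mR|) μ :=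
      ((integrable_finset_sum (range N) fun l _ => (hRlint l).abs).const_mul _).add
        (integrable_const _)
    calc ∫ ω, |B ω| ∂μ ≤ ∫ ω, ((N:ℝ)⁻¹ * ∑ l ∈ range N, |R l ω| + |mR|) ∂μ :=
          integral_mono hBint.abs hint2 hBptw
      _ = (N:ℝ)⁻¹ * ∑ l ∈ range N, (∫ ω, |R l ω| ∂μ) + |mR| := by
          rw [integral_add ((integrable_finset_sum (range N) fun l _ =>
            (hRlint l).abs).const_mul _) (integrable_const _), integral_const_mul,
            integral_finset_sum _ fun l _ => (hRlint l).abs, integral_const]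
          simp
      _ = ∫ ω, |R 0 ω| ∂μ + |mR| := by
          rw [Finset.sum_congr rfl fun l _ => hRabs_eq l, Finset.sum_const,
            card_range, nsmul_eq_mul]
          field_simp
      _ ≤ 2 * (a ^ (-η) * M) := by linarith [hRabs_le, hmR_le]
  have hsum_mem : MemLp (fun ω => ∑ l ∈ range N, T l ω) 2 μ := by
    have h := memLp_finset_sum' (range N)
      (fun l (_ : l ∈ range N) => map_memℒp2 (hTm l) (hTm 0) (hTmap l) hT2)
    have e : (∑ l ∈ range N, T l) = fun ω => ∑ l ∈ range N, T l ω := by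
      ext ω; simp
    rwa [e] at h
  have hAmem : MemLp A 2 μ := (hsum_mem.const_mul _).sub (memLp_const mT)
  have hT0sq : ∫ ω, T 0 ω ^ 2 ∂μ ≤ a ^ (1-η) * M := by
    calc ∫ ω, T 0 ω ^ 2 ∂μ ≤ ∫ ω, a ^ (1-η) * |W 0 ω| ^ (1+η) ∂μ :=
          integral_mono hT2.integrable_sq (hM.const_mul _) (fun ω => hφ_sq (W 0 ω))
      _ = a ^ (1-η) * M := by rw [integral_const_mul]
  have hAbd : ∫ ω, |A ω| ∂μ ≤ Real.sqrt ((a ^ (1-η) * M) / N) := by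
    calc ∫ ω, |A ω| ∂μ ≤ Real.sqrt (∫ ω, A ω ^ 2 ∂μ) := abs_int_le_sqrt hAmem
      _ ≤ Real.sqrt ((a ^ (1-η) * M) / N) := by
          apply Real.sqrt_le_sqrt
          calc ∫ ω, A ω ^ 2 ∂μ ≤ (∫ ω, T 0 ω ^ 2 ∂μ) / N :=
                avg_sq_le T hTm hTmap hTind hT2 N hN
            _ ≤ (a ^ (1-η) * M) / N := by gcongr
  have hκ : a ^ (-η) = (N:ℝ) ^ (-(η/(1+η))) := by
    rw [ha_def, ← Real.rpow_mul hNpos.le]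
    congr 1
    field_simp
  have hsqrt : Real.sqrt ((a ^ (1-η) * M) / N) ≤ Real.sqrt M * (N:ℝ) ^ (-(η/(1+η))) := by
    have e1 : a ^ (1-η) / (N:ℝ) = (N:ℝ) ^ ((1-η)/(1+η) - 1) := by
      rw [ha_def, ← Real.rpow_mul hNpos.le, Real.rpow_sub hNpos, Real.rpow_one]
      congr 2
      ring
    have e2 : ((1-η)/(1+η) - 1 : ℝ) = -(2*η/(1+η)) := by field_simp; ring
    have e3 : (a ^ (1-η) * M) / (N:ℝ) = M * (N:ℝ) ^ (-(2*η/(1+η))) := by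
      rw [mul_comm (a ^ (1-η)) M, mul_div_assoc, e1, e2]
    have e4 : Real.sqrt ((N:ℝ) ^ (-(2*η/(1+η)))) = (N:ℝ) ^ (-(η/(1+η))) := by
      rw [show -(2*η/(1+η)) = (-(η/(1+η))) * 2 by ring,
        Real.rpow_mul hNpos.le, show ((2:ℝ)) = ((2:ℕ):ℝ) by norm_num,
        Real.rpow_natCast, Real.sqrt_sq (Real.rpow_nonneg hNpos.le _)]
    rw [e3, Real.sqrt_mul hM0, e4]
  have hA2 := hAbd.trans hsqrt
  have hB2 : ∫ ω, |B ω| ∂μ ≤ 2 * ((N:ℝ) ^ (-(η/(1+η))) * M) := by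
    rw [← hκ]; exact hBbd
  have e5 : Real.sqrt M * (N:ℝ) ^ (-(η/(1+η))) + 2 * ((N:ℝ) ^ (-(η/(1+η))) * M)
      = (Real.sqrt M + 2*M) * (N:ℝ) ^ (-(η/(1+η))) := by ring
  linarith
end Lemma1

section MoreHelpers
variable {Ω : Type*} {mΩ : MeasurableSpace Ω} {μ : Measure Ω} [IsProbabilityMeasure μ]

lemma mul_int {U V : Ω → ℝ} (hU : MemLp U 2 μ) (hV : MemLp V 2 μ) :
    Integrable (fun ω => U ω * V ω) μ := by
  have h : MemLp (V • U) 1 μ := hU.smul hV (hpqr := ⟨by simp [ENNReal.inv_two_add_inv_two]⟩)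
  have h2 := h.integrable le_rfl
  refine h2.congr (Eventually.of_forall fun ω => ?_)
  simp [mul_comm]

lemma sqrt_div_le {Q : ℝ} (hQ : 0 ≤ Q) {N : ℝ} (hN : 1 ≤ N) {κ : ℝ}
    (hκ2 : κ ≤ 1/2) : Real.sqrt (Q / N) ≤ Real.sqrt Q * N ^ (-κ) := by
  have hN0 : (0:ℝ) < N := by linarith
  rw [Real.sqrt_div hQ]
  rw [div_eq_mul_inv]
  apply mul_le_mul_of_nonneg_left ?_ (Real.sqrt_nonneg _)
  have e1 : (Real.sqrt N)⁻¹ = N ^ (-(1/2) : ℝ) := by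
    rw [Real.sqrt_eq_rpow, ← Real.rpow_neg hN0.le]
  rw [e1]
  exact Real.rpow_le_rpow_of_exponent_le hN (by linarith)

lemma abs_sub4 (a b c d : ℝ) : |a - b - c - d| ≤ |a| + |b| + |c| + |d| := by
  calc |a - b - c - d| ≤ |a - b - c| + |d| := abs_sub _ _
    _ ≤ (|a - b| + |c|) + |d| := add_le_add_left (abs_sub _ _) _
    _ ≤ ((|a| + |b|) + |c|) + |d| := by linarith [abs_sub a b]

end MoreHelpers


end Aux
open Finset in
/-- Theorem 2 (variance part): for i.i.d. random vectors with finite `(2+2η)`-th moment,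
the empirical covariance matrix `V*` satisfies `E‖V* - V‖ = O(N^{-η/(1+η)})`
(entrywise `L¹` matrix norm). -/
theorem stmt14 {Ω : Type*} {mΩ : MeasurableSpace Ω} (μ : Measure Ω) [IsProbabilityMeasure μ]
    {k : ℕ} (Z : ℕ → Ω → EuclideanSpace ℝ (Fin k)) (hZm : ∀ l, Measurable (Z l))
    (hindep : iIndepFun Z μ)
    (hident : ∀ l, Measure.map (Z l) μ = Measure.map (Z 0) μ)
    (η : ℝ) (hη0 : 0 < η) (hη1 : η ≤ 1)
    (hmom : Integrable (fun ω => ‖Z 0 ω‖ ^ (2 + 2 * η)) μ)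
    (V : Matrix (Fin k) (Fin k) ℝ)
    (hV : ∀ j r, V j r = ∫ ω, Z 0 ω j * Z 0 ω r ∂μ -
      (∫ ω, Z 0 ω j ∂μ) * ∫ ω, Z 0 ω r ∂μ) :
    ∃ C : ℝ, ∀ N : ℕ, 1 ≤ N →
      ∫ ω, ∑ j, ∑ r,
          |((N : ℝ)⁻¹ * ∑ l ∈ Finset.range N, Z l ω j * Z l ω r -
            ((N : ℝ)⁻¹ * ∑ l ∈ Finset.range N, Z l ω j) *
              ((N : ℝ)⁻¹ * ∑ l ∈ Finset.range N, Z l ω r)) - V j r| ∂μ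
        ≤ C * (N : ℝ) ^ (-(η / (1 + η))) := by
  classical
  have h1η : (0:ℝ) < 1 + η := by linarith
  have hκ2 : η / (1+η) ≤ 1/2 := by
    rw [div_le_iff₀ h1η]; linarith
  -- coordinate projections are measurable
  have hproj : ∀ j : Fin k, Measurable (fun x : EuclideanSpace ℝ (Fin k) => x j) :=
    fun j => (EuclideanSpace.proj (𝕜 := ℝ) j).continuous.measurable
  have hcoord : ∀ (x : EuclideanSpace ℝ (Fin k)) (j : Fin k), |x j| ≤ ‖x‖ := by
    intro x j
    have h1 : |x j| ^ 2 ≤ ∑ i, ‖x i‖ ^ 2 := by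
      have h := Finset.single_le_sum (f := fun i => ‖x i‖ ^ 2)
        (fun i _ => sq_nonneg _) (Finset.mem_univ j)
      simpa [Real.norm_eq_abs, sq_abs] using h
    calc |x j| = Real.sqrt (|x j| ^ 2) := (Real.sqrt_sq (abs_nonneg _)).symm
      _ ≤ Real.sqrt (∑ i, ‖x i‖ ^ 2) := Real.sqrt_le_sqrt h1
      _ = ‖x‖ := (EuclideanSpace.norm_eq x).symm
  -- norm-square integrability
  have hnorm_sq_bd : ∀ x : EuclideanSpace ℝ (Fin k),
      ‖x‖ ^ 2 ≤ 1 + ‖x‖ ^ (2 + 2*η) := by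
    intro x
    rcases le_total ‖x‖ 1 with h | h
    · have h2 : ‖x‖ ^ 2 ≤ 1 := by
        have := pow_le_one₀ (norm_nonneg x) h (n := 2)
        linarith [this]
      have h3 : (0:ℝ) ≤ ‖x‖ ^ (2 + 2*η) := Real.rpow_nonneg (norm_nonneg _) _
      linarith
    · have h2 : ‖x‖ ^ ((2:ℕ):ℝ) ≤ ‖x‖ ^ (2 + 2*η) :=
        Real.rpow_le_rpow_of_exponent_le h (by push_cast; linarith)
      rw [Real.rpow_natCast] at h2
      linarith
  have hnormsq_int : Integrable (fun ω => ‖Z 0 ω‖ ^ 2) μ := by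
    refine Integrable.mono ((integrable_const (1:ℝ)).add hmom)
      (((hZm 0).norm.pow_const 2)).aestronglyMeasurable
      (Eventually.of_forall fun ω => ?_)
    have h1 : (0:ℝ) ≤ 1 + ‖Z 0 ω‖ ^ (2 + 2*η) := by
      have := Real.rpow_nonneg (norm_nonneg (Z 0 ω)) (2 + 2*η); linarith
    simp only [Pi.add_apply, Real.norm_eq_abs]
    rw [abs_of_nonneg (by positivity), abs_of_nonneg h1]
    exact hnorm_sq_bd _
  -- squared-coordinate integrability and MemLp 2 of coordinates
  have hsq_int : ∀ j : Fin k, Integrable (fun ω => (Z 0 ω j) ^ 2) μ := by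
    intro j
    refine Integrable.mono hnormsq_int
      (((hproj j).comp (hZm 0)).pow_const 2).aestronglyMeasurable
      (Eventually.of_forall fun ω => ?_)
    simp only [Real.norm_eq_abs]
    rw [abs_of_nonneg (sq_nonneg _), abs_of_nonneg (by positivity)]
    calc (Z 0 ω j) ^ 2 = |Z 0 ω j| ^ 2 := (sq_abs _).symm
      _ ≤ ‖Z 0 ω‖ ^ 2 := by
          apply pow_le_pow_left₀ (abs_nonneg _) (hcoord _ _)
  have hX2 : ∀ j : Fin k, MemLp (fun ω => Z 0 ω j) 2 μ :=
    fun j => (memLp_two_iff_integrable_sq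
      ((hproj j).comp (hZm 0)).aestronglyMeasurable).2 (hsq_int j)
  -- coordinate families
  have hXm : ∀ (j : Fin k) (l : ℕ), Measurable (fun ω => Z l ω j) :=
    fun j l => (hproj j).comp (hZm l)
  have hXmap : ∀ (j : Fin k) (l : ℕ),
      μ.map (fun ω => Z l ω j) = μ.map (fun ω => Z 0 ω j) := by
    intro j l
    have h1 : (fun ω => Z l ω j) = (fun x : EuclideanSpace ℝ (Fin k) => x j) ∘ Z l := rfl
    have h2 : (fun ω => Z 0 ω j) = (fun x : EuclideanSpace ℝ (Fin k) => x j) ∘ Z 0 := rfl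
    rw [h1, h2, ← Measure.map_map (hproj j) (hZm l), hident l,
      Measure.map_map (hproj j) (hZm 0)]
  have hXind : ∀ (j : Fin k) (l l' : ℕ), l ≠ l' →
      IndepFun (fun ω => Z l ω j) (fun ω => Z l' ω j) μ :=
    fun j l l' h => (hindep.indepFun h).comp (hproj j) (hproj j)
  have hX2l : ∀ (j : Fin k) (l : ℕ), MemLp (fun ω => Z l ω j) 2 μ :=
    fun j l => map_memℒp2 (hXm j l) (hXm j 0) (hXmap j l) (hX2 j)
  -- the per-pair claim
  have claim : ∀ j r : Fin k, ∃ C : ℝ, 0 ≤ C ∧ ∀ N : ℕ, 1 ≤ N →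
      Integrable (fun ω =>
        |((N : ℝ)⁻¹ * ∑ l ∈ Finset.range N, Z l ω j * Z l ω r -
          ((N : ℝ)⁻¹ * ∑ l ∈ Finset.range N, Z l ω j) *
            ((N : ℝ)⁻¹ * ∑ l ∈ Finset.range N, Z l ω r)) - V j r|) μ ∧
      ∫ ω, |((N : ℝ)⁻¹ * ∑ l ∈ Finset.range N, Z l ω j * Z l ω r -
          ((N : ℝ)⁻¹ * ∑ l ∈ Finset.range N, Z l ω j) *
            ((N : ℝ)⁻¹ * ∑ l ∈ Finset.range N, Z l ω r)) - V j r| ∂μ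
        ≤ C * (N : ℝ) ^ (-(η / (1 + η))) := by
    intro j r
    have hfm : Measurable (fun x : EuclideanSpace ℝ (Fin k) => x j * x r) :=
      (hproj j).mul (hproj r)
    have hWm : ∀ l, Measurable (fun ω => Z l ω j * Z l ω r) := fun l => hfm.comp (hZm l)
    have hWmap : ∀ l, μ.map (fun ω => Z l ω j * Z l ω r)
        = μ.map (fun ω => Z 0 ω j * Z 0 ω r) := by
      intro l
      have h1 : (fun ω => Z l ω j * Z l ω r)
          = (fun x : EuclideanSpace ℝ (Fin k) => x j * x r) ∘ Z l := rfl
      have h2 : (fun ω => Z 0 ω j * Z 0 ω r)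
          = (fun x : EuclideanSpace ℝ (Fin k) => x j * x r) ∘ Z 0 := rfl
      rw [h1, h2, ← Measure.map_map hfm (hZm l), hident l, Measure.map_map hfm (hZm 0)]
    have hWind : ∀ l l', l ≠ l' → IndepFun (fun ω => Z l ω j * Z l ω r)
        (fun ω => Z l' ω j * Z l' ω r) μ :=
      fun l l' h => (hindep.indepFun h).comp hfm hfm
    have hWptw : ∀ x : EuclideanSpace ℝ (Fin k),
        |x j * x r| ^ (1+η) ≤ ‖x‖ ^ (2 + 2*η) := by
      intro x
      have h1 : |x j * x r| ≤ ‖x‖ ^ (2:ℝ) := by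
        rw [show ((2:ℝ)) = ((2:ℕ):ℝ) by norm_num, Real.rpow_natCast, abs_mul]
        calc |x j| * |x r| ≤ ‖x‖ * ‖x‖ :=
              mul_le_mul (hcoord x j) (hcoord x r) (abs_nonneg _) (norm_nonneg _)
          _ = ‖x‖ ^ 2 := (sq ‖x‖).symm
      calc |x j * x r| ^ (1+η) ≤ (‖x‖ ^ (2:ℝ)) ^ (1+η) :=
            Real.rpow_le_rpow (abs_nonneg _) h1 (by linarith)
        _ = ‖x‖ ^ ((2:ℝ) * (1+η)) := by
            rw [← Real.rpow_mul (norm_nonneg _)]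
        _ = ‖x‖ ^ (2 + 2*η) := by ring_nf
    have hMmeas : Measurable (fun ω => |Z 0 ω j * Z 0 ω r| ^ (1+η)) :=
      (Real.continuous_rpow_const (by linarith : (0:ℝ) ≤ 1+η)).measurable.comp
        ((hWm 0).abs)
    have hMint : Integrable (fun ω => |Z 0 ω j * Z 0 ω r| ^ (1+η)) μ := by
      refine Integrable.mono hmom hMmeas.aestronglyMeasurable
        (Eventually.of_forall fun ω => ?_)
      rw [Real.norm_eq_abs, Real.norm_eq_abs,
        abs_of_nonneg (Real.rpow_nonneg (abs_nonneg _) _),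
        abs_of_nonneg (Real.rpow_nonneg (norm_nonneg _) _)]
      exact hWptw (Z 0 ω)
    obtain ⟨C1, hC10, hC1⟩ :=
      lemma_one (μ := μ) (fun l ω => Z l ω j * Z l ω r) hWm hWmap hWind hη0 hη1 hMint
    have habs_le : ∀ x : ℝ, |x| ≤ 1 + |x| ^ (1+η) := by
      intro x
      rcases le_total |x| 1 with h | h
      · have : (0:ℝ) ≤ |x| ^ (1+η) := Real.rpow_nonneg (abs_nonneg _) _
        linarith
      · have h3 : |x| ^ (1:ℝ) ≤ |x| ^ (1+η) :=
          Real.rpow_le_rpow_of_exponent_le h (by linarith)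
        rw [Real.rpow_one] at h3
        linarith
    have hW0int : Integrable (fun ω => Z 0 ω j * Z 0 ω r) μ := by
      refine Integrable.mono ((integrable_const (1:ℝ)).add hMint)
        (hWm 0).aestronglyMeasurable (Eventually.of_forall fun ω => ?_)
      simp only [Pi.add_apply, Real.norm_eq_abs]
      have h1 : (0:ℝ) ≤ 1 + |Z 0 ω j * Z 0 ω r| ^ (1+η) := by
        have := Real.rpow_nonneg (abs_nonneg (Z 0 ω j * Z 0 ω r)) (1+η); linarith
      rw [abs_of_nonneg h1]
      exact habs_le _
    have hWlint : ∀ l, Integrable (fun ω => Z l ω j * Z l ω r) μ := fun l =>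
      map_integrable (hWm l) (hWm 0) (hWmap l) id measurable_id hW0int
    refine ⟨C1 + Real.sqrt (∫ ω, (Z 0 ω j)^2 ∂μ) * Real.sqrt (∫ ω, (Z 0 ω r)^2 ∂μ)
      + |∫ ω, Z 0 ω j ∂μ| * Real.sqrt (∫ ω, (Z 0 ω r)^2 ∂μ)
      + |∫ ω, Z 0 ω r ∂μ| * Real.sqrt (∫ ω, (Z 0 ω j)^2 ∂μ), ?_, ?_⟩
    · refine add_nonneg (add_nonneg (add_nonneg hC10 ?_) ?_) ?_
      · exact mul_nonneg (Real.sqrt_nonneg _) (Real.sqrt_nonneg _)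
      · exact mul_nonneg (abs_nonneg _) (Real.sqrt_nonneg _)
      · exact mul_nonneg (abs_nonneg _) (Real.sqrt_nonneg _)
    intro N hN
    have hN1 : (1:ℝ) ≤ (N:ℝ) := by exact_mod_cast hN
    have hQ0 : ∀ q : Fin k, 0 ≤ ∫ ω, (Z 0 ω q)^2 ∂μ :=
      fun q => integral_nonneg fun ω => sq_nonneg _
    have hsum_mem : ∀ q : Fin k,
        MemLp (fun ω => ∑ l ∈ Finset.range N, Z l ω q) 2 μ := by
      intro q
      have h := memLp_finset_sum' (Finset.range N)
        (fun l (_ : l ∈ Finset.range N) => hX2l q l)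
      have e : (∑ l ∈ Finset.range N, fun ω => Z l ω q)
          = fun ω => ∑ l ∈ Finset.range N, Z l ω q := by
        ext ω; simp
      rwa [e] at h
    have hDmem : ∀ q : Fin k, MemLp (fun ω =>
        (N:ℝ)⁻¹ * ∑ l ∈ Finset.range N, Z l ω q - ∫ ω', Z 0 ω' q ∂μ) 2 μ :=
      fun q => ((hsum_mem q).const_mul _).sub (memLp_const _)
    have hDsq : ∀ q : Fin k, ∫ ω, ((N:ℝ)⁻¹ * ∑ l ∈ Finset.range N, Z l ω q
        - ∫ ω', Z 0 ω' q ∂μ)^2 ∂μ ≤ (∫ ω, (Z 0 ω q)^2 ∂μ)/N :=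
      fun q => avg_sq_le (fun l ω => Z l ω q) (hXm q) (hXmap q) (hXind q) (hX2 q) N hN
    have hsqrtD : ∀ q : Fin k, Real.sqrt (∫ ω, ((N:ℝ)⁻¹ * ∑ l ∈ Finset.range N, Z l ω q
          - ∫ ω', Z 0 ω' q ∂μ)^2 ∂μ)
        ≤ Real.sqrt (∫ ω, (Z 0 ω q)^2 ∂μ) * (N:ℝ)^(-(η/(1+η))) :=
      fun q => (Real.sqrt_le_sqrt (hDsq q)).trans (sqrt_div_le (hQ0 q) hN1 hκ2)
    have hDabs : ∀ q : Fin k, ∫ ω, |(N:ℝ)⁻¹ * ∑ l ∈ Finset.range N, Z l ω q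
          - ∫ ω', Z 0 ω' q ∂μ| ∂μ
        ≤ Real.sqrt (∫ ω, (Z 0 ω q)^2 ∂μ) * (N:ℝ)^(-(η/(1+η))) :=
      fun q => (abs_int_le_sqrt (hDmem q)).trans (hsqrtD q)
    have hκN0 : (0:ℝ) ≤ (N:ℝ)^(-(η/(1+η))) := Real.rpow_nonneg (by linarith) _
    have hκN1 : (N:ℝ)^(-(η/(1+η))) ≤ 1 :=
      Real.rpow_le_one_of_one_le_of_nonpos hN1 (by
        have : (0:ℝ) ≤ η/(1+η) := by positivity
        linarith)
    have ht2 : ∫ ω, |((N:ℝ)⁻¹ * ∑ l ∈ Finset.range N, Z l ω j - ∫ ω', Z 0 ω' j ∂μ)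
          * ((N:ℝ)⁻¹ * ∑ l ∈ Finset.range N, Z l ω r - ∫ ω', Z 0 ω' r ∂μ)| ∂μ
        ≤ Real.sqrt (∫ ω, (Z 0 ω j)^2 ∂μ) * Real.sqrt (∫ ω, (Z 0 ω r)^2 ∂μ)
          * (N:ℝ)^(-(η/(1+η))) := by
      calc ∫ ω, |((N:ℝ)⁻¹ * ∑ l ∈ Finset.range N, Z l ω j - ∫ ω', Z 0 ω' j ∂μ)
            * ((N:ℝ)⁻¹ * ∑ l ∈ Finset.range N, Z l ω r - ∫ ω', Z 0 ω' r ∂μ)| ∂μ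
          ≤ Real.sqrt (∫ ω, ((N:ℝ)⁻¹ * ∑ l ∈ Finset.range N, Z l ω j
              - ∫ ω', Z 0 ω' j ∂μ)^2 ∂μ)
            * Real.sqrt (∫ ω, ((N:ℝ)⁻¹ * ∑ l ∈ Finset.range N, Z l ω r
              - ∫ ω', Z 0 ω' r ∂μ)^2 ∂μ) := cs_integral (hDmem j) (hDmem r)
        _ ≤ (Real.sqrt (∫ ω, (Z 0 ω j)^2 ∂μ) * (N:ℝ)^(-(η/(1+η))))
            * (Real.sqrt (∫ ω, (Z 0 ω r)^2 ∂μ) * (N:ℝ)^(-(η/(1+η)))) :=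
            mul_le_mul (hsqrtD j) (hsqrtD r) (Real.sqrt_nonneg _)
              (mul_nonneg (Real.sqrt_nonneg _) hκN0)
        _ = Real.sqrt (∫ ω, (Z 0 ω j)^2 ∂μ) * Real.sqrt (∫ ω, (Z 0 ω r)^2 ∂μ)
            * ((N:ℝ)^(-(η/(1+η))) * (N:ℝ)^(-(η/(1+η)))) := by ring
        _ ≤ Real.sqrt (∫ ω, (Z 0 ω j)^2 ∂μ) * Real.sqrt (∫ ω, (Z 0 ω r)^2 ∂μ)
            * ((N:ℝ)^(-(η/(1+η))) * 1) := by
            refine mul_le_mul_of_nonneg_left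
              (mul_le_mul_of_nonneg_left hκN1 hκN0)
              (mul_nonneg (Real.sqrt_nonneg _) (Real.sqrt_nonneg _))
        _ = Real.sqrt (∫ ω, (Z 0 ω j)^2 ∂μ) * Real.sqrt (∫ ω, (Z 0 ω r)^2 ∂μ)
            * (N:ℝ)^(-(η/(1+η))) := by ring
    have ht34 : ∀ (c : ℝ) (q : Fin k),
        ∫ ω, |c * ((N:ℝ)⁻¹ * ∑ l ∈ Finset.range N, Z l ω q - ∫ ω', Z 0 ω' q ∂μ)| ∂μ
        ≤ |c| * (Real.sqrt (∫ ω, (Z 0 ω q)^2 ∂μ) * (N:ℝ)^(-(η/(1+η)))) := by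
      intro c q
      have e : ∫ ω, |c * ((N:ℝ)⁻¹ * ∑ l ∈ Finset.range N, Z l ω q
            - ∫ ω', Z 0 ω' q ∂μ)| ∂μ
          = |c| * ∫ ω, |(N:ℝ)⁻¹ * ∑ l ∈ Finset.range N, Z l ω q
            - ∫ ω', Z 0 ω' q ∂μ| ∂μ := by
        simp only [abs_mul]
        rw [integral_const_mul]
      rw [e]
      exact mul_le_mul_of_nonneg_left (hDabs q) (abs_nonneg c)
    -- integrability of the full entry
    have h1 : Integrable (fun ω => (N:ℝ)⁻¹ * ∑ l ∈ Finset.range N, Z l ω j * Z l ω r) μ :=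
      (integrable_finset_sum _ fun l _ => hWlint l).const_mul _
    have h2 : Integrable (fun ω => ((N:ℝ)⁻¹ * ∑ l ∈ Finset.range N, Z l ω j)
        * ((N:ℝ)⁻¹ * ∑ l ∈ Finset.range N, Z l ω r)) μ :=
      mul_int ((hsum_mem j).const_mul _) ((hsum_mem r).const_mul _)
    have hEint : Integrable (fun ω =>
        |((N : ℝ)⁻¹ * ∑ l ∈ Finset.range N, Z l ω j * Z l ω r -
          ((N : ℝ)⁻¹ * ∑ l ∈ Finset.range N, Z l ω j) *
            ((N : ℝ)⁻¹ * ∑ l ∈ Finset.range N, Z l ω r)) - V j r|) μ :=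
      ((h1.sub h2).sub (integrable_const _)).abs
    refine ⟨hEint, ?_⟩
    rw [hV j r]
    have hptw : ∀ ω, |((N : ℝ)⁻¹ * ∑ l ∈ Finset.range N, Z l ω j * Z l ω r -
          ((N : ℝ)⁻¹ * ∑ l ∈ Finset.range N, Z l ω j) *
            ((N : ℝ)⁻¹ * ∑ l ∈ Finset.range N, Z l ω r)) -
          (∫ ω', Z 0 ω' j * Z 0 ω' r ∂μ - (∫ ω', Z 0 ω' j ∂μ) * ∫ ω', Z 0 ω' r ∂μ)|
        ≤ |(N:ℝ)⁻¹ * ∑ l ∈ Finset.range N, Z l ω j * Z l ω r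
            - ∫ ω', Z 0 ω' j * Z 0 ω' r ∂μ|
          + |((N:ℝ)⁻¹ * ∑ l ∈ Finset.range N, Z l ω j - ∫ ω', Z 0 ω' j ∂μ)
            * ((N:ℝ)⁻¹ * ∑ l ∈ Finset.range N, Z l ω r - ∫ ω', Z 0 ω' r ∂μ)|
          + |(∫ ω', Z 0 ω' j ∂μ)
            * ((N:ℝ)⁻¹ * ∑ l ∈ Finset.range N, Z l ω r - ∫ ω', Z 0 ω' r ∂μ)|
          + |(∫ ω', Z 0 ω' r ∂μ)
            * ((N:ℝ)⁻¹ * ∑ l ∈ Finset.range N, Z l ω j - ∫ ω', Z 0 ω' j ∂μ)| := by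
      intro ω
      have e : ((N : ℝ)⁻¹ * ∑ l ∈ Finset.range N, Z l ω j * Z l ω r -
          ((N : ℝ)⁻¹ * ∑ l ∈ Finset.range N, Z l ω j) *
            ((N : ℝ)⁻¹ * ∑ l ∈ Finset.range N, Z l ω r)) -
          (∫ ω', Z 0 ω' j * Z 0 ω' r ∂μ - (∫ ω', Z 0 ω' j ∂μ) * ∫ ω', Z 0 ω' r ∂μ)
        = ((N:ℝ)⁻¹ * ∑ l ∈ Finset.range N, Z l ω j * Z l ω r
            - ∫ ω', Z 0 ω' j * Z 0 ω' r ∂μ)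
          - (((N:ℝ)⁻¹ * ∑ l ∈ Finset.range N, Z l ω j - ∫ ω', Z 0 ω' j ∂μ)
            * ((N:ℝ)⁻¹ * ∑ l ∈ Finset.range N, Z l ω r - ∫ ω', Z 0 ω' r ∂μ))
          - ((∫ ω', Z 0 ω' j ∂μ)
            * ((N:ℝ)⁻¹ * ∑ l ∈ Finset.range N, Z l ω r - ∫ ω', Z 0 ω' r ∂μ))
          - ((∫ ω', Z 0 ω' r ∂μ)
            * ((N:ℝ)⁻¹ * ∑ l ∈ Finset.range N, Z l ω j - ∫ ω', Z 0 ω' j ∂μ)) := by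
        ring
      rw [e]
      exact abs_sub4 _ _ _ _
    have hf1 : Integrable (fun ω => |(N:ℝ)⁻¹ * ∑ l ∈ Finset.range N, Z l ω j * Z l ω r
        - ∫ ω', Z 0 ω' j * Z 0 ω' r ∂μ|) μ := (h1.sub (integrable_const _)).abs
    have hf2 : Integrable (fun ω =>
        |((N:ℝ)⁻¹ * ∑ l ∈ Finset.range N, Z l ω j - ∫ ω', Z 0 ω' j ∂μ)
          * ((N:ℝ)⁻¹ * ∑ l ∈ Finset.range N, Z l ω r - ∫ ω', Z 0 ω' r ∂μ)|) μ :=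
      (mul_int (hDmem j) (hDmem r)).abs
    have hf3 : Integrable (fun ω => |(∫ ω', Z 0 ω' j ∂μ)
        * ((N:ℝ)⁻¹ * ∑ l ∈ Finset.range N, Z l ω r - ∫ ω', Z 0 ω' r ∂μ)|) μ :=
      (((hDmem r).integrable one_le_two).const_mul _).abs
    have hf4 : Integrable (fun ω => |(∫ ω', Z 0 ω' r ∂μ)
        * ((N:ℝ)⁻¹ * ∑ l ∈ Finset.range N, Z l ω j - ∫ ω', Z 0 ω' j ∂μ)|) μ :=
      (((hDmem j).integrable one_le_two).const_mul _).abs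
    calc ∫ ω, |((N : ℝ)⁻¹ * ∑ l ∈ Finset.range N, Z l ω j * Z l ω r -
          ((N : ℝ)⁻¹ * ∑ l ∈ Finset.range N, Z l ω j) *
            ((N : ℝ)⁻¹ * ∑ l ∈ Finset.range N, Z l ω r)) -
          (∫ ω', Z 0 ω' j * Z 0 ω' r ∂μ - (∫ ω', Z 0 ω' j ∂μ) * ∫ ω', Z 0 ω' r ∂μ)| ∂μ
        ≤ ∫ ω, (|(N:ℝ)⁻¹ * ∑ l ∈ Finset.range N, Z l ω j * Z l ω r
            - ∫ ω', Z 0 ω' j * Z 0 ω' r ∂μ|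
          + |((N:ℝ)⁻¹ * ∑ l ∈ Finset.range N, Z l ω j - ∫ ω', Z 0 ω' j ∂μ)
            * ((N:ℝ)⁻¹ * ∑ l ∈ Finset.range N, Z l ω r - ∫ ω', Z 0 ω' r ∂μ)|
          + |(∫ ω', Z 0 ω' j ∂μ)
            * ((N:ℝ)⁻¹ * ∑ l ∈ Finset.range N, Z l ω r - ∫ ω', Z 0 ω' r ∂μ)|
          + |(∫ ω', Z 0 ω' r ∂μ)
            * ((N:ℝ)⁻¹ * ∑ l ∈ Finset.range N, Z l ω j - ∫ ω', Z 0 ω' j ∂μ)|) ∂μ := by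
          refine integral_mono ((h1.sub h2).sub (integrable_const _)).abs
            (((hf1.add hf2).add hf3).add hf4) hptw
      _ = (∫ ω, |(N:ℝ)⁻¹ * ∑ l ∈ Finset.range N, Z l ω j * Z l ω r
            - ∫ ω', Z 0 ω' j * Z 0 ω' r ∂μ| ∂μ)
          + (∫ ω, |((N:ℝ)⁻¹ * ∑ l ∈ Finset.range N, Z l ω j - ∫ ω', Z 0 ω' j ∂μ)
            * ((N:ℝ)⁻¹ * ∑ l ∈ Finset.range N, Z l ω r - ∫ ω', Z 0 ω' r ∂μ)| ∂μ)
          + (∫ ω, |(∫ ω', Z 0 ω' j ∂μ)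
            * ((N:ℝ)⁻¹ * ∑ l ∈ Finset.range N, Z l ω r - ∫ ω', Z 0 ω' r ∂μ)| ∂μ)
          + (∫ ω, |(∫ ω', Z 0 ω' r ∂μ)
            * ((N:ℝ)⁻¹ * ∑ l ∈ Finset.range N, Z l ω j - ∫ ω', Z 0 ω' j ∂μ)| ∂μ) := by
          have e1 : ∫ ω, (|(N:ℝ)⁻¹ * ∑ l ∈ Finset.range N, Z l ω j * Z l ω r
            - ∫ ω', Z 0 ω' j * Z 0 ω' r ∂μ|
          + |((N:ℝ)⁻¹ * ∑ l ∈ Finset.range N, Z l ω j - ∫ ω', Z 0 ω' j ∂μ)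
            * ((N:ℝ)⁻¹ * ∑ l ∈ Finset.range N, Z l ω r - ∫ ω', Z 0 ω' r ∂μ)|) ∂μ
          = (∫ ω, |(N:ℝ)⁻¹ * ∑ l ∈ Finset.range N, Z l ω j * Z l ω r
            - ∫ ω', Z 0 ω' j * Z 0 ω' r ∂μ| ∂μ)
          + (∫ ω, |((N:ℝ)⁻¹ * ∑ l ∈ Finset.range N, Z l ω j - ∫ ω', Z 0 ω' j ∂μ)
            * ((N:ℝ)⁻¹ * ∑ l ∈ Finset.range N, Z l ω r - ∫ ω', Z 0 ω' r ∂μ)| ∂μ) := integral_add hf1 hf2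
          have e2 : ∫ ω, (|(N:ℝ)⁻¹ * ∑ l ∈ Finset.range N, Z l ω j * Z l ω r
            - ∫ ω', Z 0 ω' j * Z 0 ω' r ∂μ|
          + |((N:ℝ)⁻¹ * ∑ l ∈ Finset.range N, Z l ω j - ∫ ω', Z 0 ω' j ∂μ)
            * ((N:ℝ)⁻¹ * ∑ l ∈ Finset.range N, Z l ω r - ∫ ω', Z 0 ω' r ∂μ)|
          + |(∫ ω', Z 0 ω' j ∂μ)
            * ((N:ℝ)⁻¹ * ∑ l ∈ Finset.range N, Z l ω r - ∫ ω', Z 0 ω' r ∂μ)|) ∂μ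
          = (∫ ω, (|(N:ℝ)⁻¹ * ∑ l ∈ Finset.range N, Z l ω j * Z l ω r
            - ∫ ω', Z 0 ω' j * Z 0 ω' r ∂μ|
          + |((N:ℝ)⁻¹ * ∑ l ∈ Finset.range N, Z l ω j - ∫ ω', Z 0 ω' j ∂μ)
            * ((N:ℝ)⁻¹ * ∑ l ∈ Finset.range N, Z l ω r - ∫ ω', Z 0 ω' r ∂μ)|) ∂μ)
          + (∫ ω, |(∫ ω', Z 0 ω' j ∂μ)
            * ((N:ℝ)⁻¹ * ∑ l ∈ Finset.range N, Z l ω r - ∫ ω', Z 0 ω' r ∂μ)| ∂μ) := integral_add (hf1.add hf2) hf3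
          have e3 : ∫ ω, (|(N:ℝ)⁻¹ * ∑ l ∈ Finset.range N, Z l ω j * Z l ω r
            - ∫ ω', Z 0 ω' j * Z 0 ω' r ∂μ|
          + |((N:ℝ)⁻¹ * ∑ l ∈ Finset.range N, Z l ω j - ∫ ω', Z 0 ω' j ∂μ)
            * ((N:ℝ)⁻¹ * ∑ l ∈ Finset.range N, Z l ω r - ∫ ω', Z 0 ω' r ∂μ)|
          + |(∫ ω', Z 0 ω' j ∂μ)
            * ((N:ℝ)⁻¹ * ∑ l ∈ Finset.range N, Z l ω r - ∫ ω', Z 0 ω' r ∂μ)|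
          + |(∫ ω', Z 0 ω' r ∂μ)
            * ((N:ℝ)⁻¹ * ∑ l ∈ Finset.range N, Z l ω j - ∫ ω', Z 0 ω' j ∂μ)|) ∂μ
          = (∫ ω, (|(N:ℝ)⁻¹ * ∑ l ∈ Finset.range N, Z l ω j * Z l ω r
            - ∫ ω', Z 0 ω' j * Z 0 ω' r ∂μ|
          + |((N:ℝ)⁻¹ * ∑ l ∈ Finset.range N, Z l ω j - ∫ ω', Z 0 ω' j ∂μ)
            * ((N:ℝ)⁻¹ * ∑ l ∈ Finset.range N, Z l ω r - ∫ ω', Z 0 ω' r ∂μ)|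
          + |(∫ ω', Z 0 ω' j ∂μ)
            * ((N:ℝ)⁻¹ * ∑ l ∈ Finset.range N, Z l ω r - ∫ ω', Z 0 ω' r ∂μ)|) ∂μ)
          + (∫ ω, |(∫ ω', Z 0 ω' r ∂μ)
            * ((N:ℝ)⁻¹ * ∑ l ∈ Finset.range N, Z l ω j - ∫ ω', Z 0 ω' j ∂μ)| ∂μ) := integral_add ((hf1.add hf2).add hf3) hf4
          rw [e3, e2, e1]
      _ ≤ C1 * (N:ℝ)^(-(η/(1+η)))
          + Real.sqrt (∫ ω, (Z 0 ω j)^2 ∂μ) * Real.sqrt (∫ ω, (Z 0 ω r)^2 ∂μ)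
            * (N:ℝ)^(-(η/(1+η)))
          + |∫ ω, Z 0 ω j ∂μ| * (Real.sqrt (∫ ω, (Z 0 ω r)^2 ∂μ) * (N:ℝ)^(-(η/(1+η))))
          + |∫ ω, Z 0 ω r ∂μ| * (Real.sqrt (∫ ω, (Z 0 ω j)^2 ∂μ) * (N:ℝ)^(-(η/(1+η)))) := by
          refine add_le_add (add_le_add (add_le_add ?_ ht2) (ht34 _ r)) (ht34 _ j)
          exact hC1 N hN
      _ = (C1 + Real.sqrt (∫ ω, (Z 0 ω j)^2 ∂μ) * Real.sqrt (∫ ω, (Z 0 ω r)^2 ∂μ)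
          + |∫ ω, Z 0 ω j ∂μ| * Real.sqrt (∫ ω, (Z 0 ω r)^2 ∂μ)
          + |∫ ω, Z 0 ω r ∂μ| * Real.sqrt (∫ ω, (Z 0 ω j)^2 ∂μ))
          * (N : ℝ) ^ (-(η / (1 + η))) := by ring

  choose C' hC'0 hC' using claim
  refine ⟨∑ j, ∑ r, C' j r, ?_⟩
  intro N hN
  have hint : ∀ j r : Fin k, Integrable (fun ω =>
      |((N : ℝ)⁻¹ * ∑ l ∈ Finset.range N, Z l ω j * Z l ω r -
        ((N : ℝ)⁻¹ * ∑ l ∈ Finset.range N, Z l ω j) *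
          ((N : ℝ)⁻¹ * ∑ l ∈ Finset.range N, Z l ω r)) - V j r|) μ :=
    fun j r => (hC' j r N hN).1
  calc ∫ ω, ∑ j, ∑ r,
        |((N : ℝ)⁻¹ * ∑ l ∈ Finset.range N, Z l ω j * Z l ω r -
          ((N : ℝ)⁻¹ * ∑ l ∈ Finset.range N, Z l ω j) *
            ((N : ℝ)⁻¹ * ∑ l ∈ Finset.range N, Z l ω r)) - V j r| ∂μ
      = ∑ j, ∑ r, ∫ ω,
        |((N : ℝ)⁻¹ * ∑ l ∈ Finset.range N, Z l ω j * Z l ω r -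
          ((N : ℝ)⁻¹ * ∑ l ∈ Finset.range N, Z l ω j) *
            ((N : ℝ)⁻¹ * ∑ l ∈ Finset.range N, Z l ω r)) - V j r| ∂μ := by
        rw [integral_finset_sum _ fun j _ =>
          integrable_finset_sum _ fun r _ => hint j r]
        exact Finset.sum_congr rfl fun j _ =>
          integral_finset_sum _ fun r _ => hint j r
    _ ≤ ∑ j, ∑ r, C' j r * (N : ℝ) ^ (-(η / (1 + η))) :=
        Finset.sum_le_sum fun j _ => Finset.sum_le_sum fun r _ => (hC' j r N hN).2
    _ = (∑ j, ∑ r, C' j r) * (N : ℝ) ^ (-(η / (1 + η))) := by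
        rw [Finset.sum_mul]
        exact Finset.sum_congr rfl fun j _ => (Finset.sum_mul _ _ _).symm
end
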